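/- For any g, h, k ∈ G and any c′, c″, c‴ ∈ 𝒞, the following associativity identity holds in 𝒞: m_{gh,k}(m_{g,h}(c′⊗c″) ⊗ c‴) = m_{g,hk}(c′ ⊗ m_{h,k}(c″⊗c‴)), i.e. Σ_{i,j} ξ′ⱼ ξ′ᵢ c′ g(ξ″ᵢ c″) c_{g,h} (gh)(ξ″ⱼ c‴) c_{gh,k} = Σ_{n,m} ξ′ₙ c′ g(ξ″ₙ ξ′ₘ c″ h(ξ″ₘ c‴) c_{h,k}) c_{g,hk}. In particular, the induced multiplication on HH₀(𝒞) is associative. -/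

import Mathlib

open scoped TensorProduct

noncomputable section

variable {K : Type*} [Field K] {G : Type*} [Group G]
  {A : Type*} [Ring A] [Algebra K A] {ι : Type*} [Fintype ι]

/-- The subspace `𝒞_h = span{c₁c₂ − c₂·h(c₁) | c₁, c₂ ∈ 𝒞}`. -/
def commSub (ρ : G → A ≃ₐ[K] A) (h : G) : Submodule K A :=
  Submodule.span K {x | ∃ c₁ c₂ : A, x = c₁ * c₂ - c₂ * ρ h c₁}

/-- The map `T_h(g)(c) = c_e⁻¹ c_{g,g⁻¹}⁻¹ g(c) c_{g,h} c_{gh,g⁻¹}`. -/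
def Tmap (ρ : G → A ≃ₐ[K] A) (u : G → G → Aˣ) (ue : Aˣ) (g h : G) (x : A) : A :=
  (↑(ue⁻¹) : A) * (↑((u g g⁻¹)⁻¹) : A) * ρ g x * (↑(u g h) : A) * (↑(u (g * h) g⁻¹) : A)

/-- The twisted multiplication `m_{g,h}(c′⊗c″) = Σᵢ ξ′ᵢ c′ g(ξ″ᵢ c″) c_{g,h}`. -/
def mMul (ρ : G → A ≃ₐ[K] A) (u : G → G → Aˣ) (ξ₁ ξ₂ : ι → A) (g h : G)
    (c' c'' : A) : A :=
  ∑ i, ξ₁ i * c' * ρ g (ξ₂ i * c'') * (↑(u g h) : A)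

/-- The twisted comultiplication `Δ_{g,h}(c) = Σᵢ c c_{g,h}⁻¹ g(ξ′ᵢ) ⊗ ξ″ᵢ`. -/
def ΔCom (ρ : G → A ≃ₐ[K] A) (u : G → G → Aˣ) (ξ₁ ξ₂ : ι → A) (g h : G)
    (c : A) : A ⊗[K] A :=
  ∑ i, (c * (↑((u g h)⁻¹) : A) * ρ g (ξ₁ i)) ⊗ₜ[K] ξ₂ i

/-- The subspace `𝒞_g ⊗ 𝒞` of `𝒞 ⊗ 𝒞`. -/
def leftTensor (ρ : G → A ≃ₐ[K] A) (g : G) : Submodule K (A ⊗[K] A) :=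
  Submodule.span K {z | ∃ x ∈ commSub ρ g, ∃ y : A, z = x ⊗ₜ[K] y}

/-- The subspace `𝒞 ⊗ 𝒞_h` of `𝒞 ⊗ 𝒞`. -/
def rightTensor (ρ : G → A ≃ₐ[K] A) (h : G) : Submodule K (A ⊗[K] A) :=
  Submodule.span K {z | ∃ x : A, ∃ y ∈ commSub ρ h, z = x ⊗ₜ[K] y}


/-!
Expanding both sides, they differ only in where the Casimir factor `ξ′ⱼ` of the outer
multiplication sits: on the left it multiplies `ξ′ᵢ` from the left, on the right it appears as
`g(ξ′ⱼ)` next to `g(ξ″ᵢ)`. For a symmetric trace form the Casimir element is central,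
`Σ zξ′ᵢ ⊗ ξ″ᵢ = Σ ξ′ᵢ ⊗ ξ″ᵢz`, which moves the factor across. What remains is
`g(h(x)) g(c_{h,k}) c_{g,hk} = c_{g,h} (gh)(x) c_{gh,k}`: conjugation relation plus cocycle identity.
-/

section Casimir

variable {K : Type*} [CommSemiring K] {A : Type*} [Semiring A] [Algebra K A]
  {ι : Type*} [Fintype ι] (θ : A →ₗ[K] K) (ξ₁ ξ₂ : ι → A)

theorem eq_sum_smul_of_casimir_symm (hξ : ∀ a : A, a = ∑ i, θ (a * ξ₂ i) • ξ₁ i)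
    (hξsym : (∑ i, ξ₁ i ⊗ₜ[K] ξ₂ i) = ∑ i, ξ₂ i ⊗ₜ[K] ξ₁ i) (a : A) :
    a = ∑ i, θ (a * ξ₁ i) • ξ₂ i := by
  have := congrArg ((TensorProduct.lid K A).toLinearMap ∘ₗ
    TensorProduct.map (θ ∘ₗ LinearMap.mulLeft K a) LinearMap.id) hξsym
  simp only [map_sum, LinearMap.comp_apply, TensorProduct.map_tmul, LinearMap.mulLeft_apply,
    LinearMap.id_apply, LinearEquiv.coe_coe, TensorProduct.lid_tmul] at this
  rw [this]
  exact hξ a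

theorem sum_mul_tmul_eq_sum_tmul_mul (htr : ∀ a b : A, θ (a * b) = θ (b * a))
    (hξ : ∀ a : A, a = ∑ i, θ (a * ξ₂ i) • ξ₁ i)
    (hξsym : (∑ i, ξ₁ i ⊗ₜ[K] ξ₂ i) = ∑ i, ξ₂ i ⊗ₜ[K] ξ₁ i) (z : A) :
    ∑ i, (z * ξ₁ i) ⊗ₜ[K] ξ₂ i = ∑ i, ξ₁ i ⊗ₜ[K] (ξ₂ i * z) := by
  have hξ' := eq_sum_smul_of_casimir_symm θ ξ₁ ξ₂ hξ hξsym
  calc ∑ i, (z * ξ₁ i) ⊗ₜ[K] ξ₂ i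
      = ∑ i, ∑ j, θ (z * ξ₁ i * ξ₂ j) • ξ₁ j ⊗ₜ[K] ξ₂ i := by
        refine Finset.sum_congr rfl fun i _ => ?_
        simp only [TensorProduct.smul_tmul', ← TensorProduct.sum_tmul]
        rw [← hξ]
    _ = ∑ j, ∑ i, θ (ξ₂ j * z * ξ₁ i) • ξ₁ j ⊗ₜ[K] ξ₂ i := by
        rw [Finset.sum_comm]
        refine Finset.sum_congr rfl fun j _ => Finset.sum_congr rfl fun i _ => ?_
        rw [htr, mul_assoc]
    _ = ∑ j, ξ₁ j ⊗ₜ[K] (ξ₂ j * z) := by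
        refine Finset.sum_congr rfl fun j _ => ?_
        simp only [← TensorProduct.tmul_smul, ← TensorProduct.tmul_sum]
        rw [← hξ']

theorem sum_mul_mul_map_eq_sum_mul_map_mul (htr : ∀ a b : A, θ (a * b) = θ (b * a))
    (hξ : ∀ a : A, a = ∑ i, θ (a * ξ₂ i) • ξ₁ i)
    (hξsym : (∑ i, ξ₁ i ⊗ₜ[K] ξ₂ i) = ∑ i, ξ₂ i ⊗ₜ[K] ξ₁ i) (φ : A →ₗ[K] A) (z a : A) :
    ∑ i, z * ξ₁ i * a * φ (ξ₂ i) = ∑ i, ξ₁ i * a * φ (ξ₂ i * z) := by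
  have := congrArg (LinearMap.mul' K A ∘ₗ TensorProduct.map (LinearMap.mulRight K a) φ)
    (sum_mul_tmul_eq_sum_tmul_mul θ ξ₁ ξ₂ htr hξ hξsym z)
  simpa only [map_sum, LinearMap.comp_apply, TensorProduct.map_tmul, LinearMap.mulRight_apply,
    LinearMap.mul'_apply] using this

end Casimir

theorem mul_map_mul_eq_of_cocycle {K : Type*} [CommSemiring K] {G : Type*} [Monoid G]
    {A : Type*} [Semiring A] [Algebra K A] (ρ : G → A ≃ₐ[K] A) (u : G → G → Aˣ)
    (hAd : ∀ (g h : G) (x : A),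
      ρ g (ρ h x) = (↑(u g h) : A) * ρ (g * h) x * (↑((u g h)⁻¹) : A))
    (hcoc : ∀ g h k : G,
      (↑(u g h) : A) * (↑(u (g * h) k) : A) = ρ g (↑(u h k) : A) * (↑(u g (h * k)) : A))
    (g h k : G) (x : A) :
    ρ g (ρ h x) * ρ g (u h k) * u g (h * k) = u g h * ρ (g * h) x * u (g * h) k := by
  rw [mul_assoc, ← hcoc, hAd]
  simp only [mul_assoc, Units.inv_mul_cancel_left]

theorem mMul_assoc_general
    (ρ : G → A ≃ₐ[K] A) (u : G → G → Aˣ)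
    (hAd : ∀ (g h : G) (x : A),
      ρ g (ρ h x) = (↑(u g h) : A) * ρ (g * h) x * (↑((u g h)⁻¹) : A))
    (hcoc : ∀ g h k : G,
      (↑(u g h) : A) * (↑(u (g * h) k) : A) = ρ g (↑(u h k) : A) * (↑(u g (h * k)) : A))
    (θ : A →ₗ[K] K)
    (htr : ∀ a b : A, θ (a * b) = θ (b * a))
    (ξ₁ ξ₂ : ι → A)
    (hξ : ∀ a : A, a = ∑ i, θ (a * ξ₂ i) • ξ₁ i)
    (hξsym : (∑ i, ξ₁ i ⊗ₜ[K] ξ₂ i) = ∑ i, ξ₂ i ⊗ₜ[K] ξ₁ i)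
    (g h k : G) (c' c'' c''' : A) :
    mMul ρ u ξ₁ ξ₂ (g * h) k (mMul ρ u ξ₁ ξ₂ g h c' c'') c''' =
      mMul ρ u ξ₁ ξ₂ g (h * k) c' (mMul ρ u ξ₁ ξ₂ h k c'' c''') := by
  unfold mMul
  set w : A → A := fun y ↦ ρ g c'' * (u g h * ρ (g * h) y * u (g * h) k)
  calc ∑ j, ξ₁ j * (∑ i, ξ₁ i * c' * ρ g (ξ₂ i * c'') * u g h) * ρ (g * h) (ξ₂ j * c''') *
        u (g * h) k
      = ∑ j, ∑ i, ξ₁ j * ξ₁ i * c' * ρ g (ξ₂ i) * w (ξ₂ j * c''') := by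
        simp only [w, Finset.mul_sum, Finset.sum_mul, map_mul, mul_assoc]
    _ = ∑ j, ∑ i, ξ₁ i * c' * ρ g (ξ₂ i * ξ₁ j) * w (ξ₂ j * c''') := by
        have slide := sum_mul_mul_map_eq_sum_mul_map_mul θ ξ₁ ξ₂ htr hξ hξsym (ρ g).toLinearMap
        simp only [AlgEquiv.toLinearMap_apply] at slide
        simp only [← Finset.sum_mul, slide]
    _ = ∑ i, ξ₁ i * c' * ρ g (ξ₂ i * ∑ j, ξ₁ j * c'' * ρ h (ξ₂ j * c''') * u h k) *
          u g (h * k) := by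
        rw [Finset.sum_comm]
        simp only [Finset.mul_sum, map_sum, Finset.sum_mul]
        refine Finset.sum_congr rfl fun i _ => Finset.sum_congr rfl fun j _ => ?_
        simp only [w]
        rw [← mul_map_mul_eq_of_cocycle ρ u hAd hcoc]
        simp only [map_mul, mul_assoc]

theorem mMul_assoc
    [Fintype G] (ρ : G → A ≃ₐ[K] A) (u : G → G → Aˣ) (ue : Aˣ)
    (hAd : ∀ (g h : G) (x : A),
      ρ g (ρ h x) = (↑(u g h) : A) * ρ (g * h) x * (↑((u g h)⁻¹) : A))
    (hAde : ∀ x : A, ρ (1 : G) x = (↑ue : A) * x * (↑(ue⁻¹) : A))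
    (hcoc : ∀ g h k : G,
      (↑(u g h) : A) * (↑(u (g * h) k) : A) = ρ g (↑(u h k) : A) * (↑(u g (h * k)) : A))
    (hue1 : ∀ g : G, (↑(u g 1) : A) = ρ g (↑ue : A))
    (hue2 : ∀ g : G, (↑(u 1 g) : A) = (↑ue : A))
    [FiniteDimensional K A] (θ : A →ₗ[K] K)
    (htr : ∀ a b : A, θ (a * b) = θ (b * a))
    (hnd : ∀ a : A, (∀ b : A, θ (a * b) = 0) → a = 0)
    (hGinv : ∀ (g : G) (a : A), θ (ρ g a) = θ a)
    (ξ₁ ξ₂ : ι → A)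
    (hξ : ∀ a : A, a = ∑ i, θ (a * ξ₂ i) • ξ₁ i)
    (hξsym : (∑ i, ξ₁ i ⊗ₜ[K] ξ₂ i) = ∑ i, ξ₂ i ⊗ₜ[K] ξ₁ i)
    (g h k : G) (c' c'' c''' : A) :
    mMul ρ u ξ₁ ξ₂ (g * h) k (mMul ρ u ξ₁ ξ₂ g h c' c'') c''' =
      mMul ρ u ξ₁ ξ₂ g (h * k) c' (mMul ρ u ξ₁ ξ₂ h k c'' c''') :=
  mMul_assoc_general ρ u hAd hcoc θ htr ξ₁ ξ₂ hξ hξsym g h k c' c'' c'''
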